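/- arXiv:1503.06354 — 4 statements merged into one kernel-verified Lean document; each statement's English description precedes it below -/
import Mathlib

section
/- Let Λ₁ : L⁰(ℝᴺ) → L⁰(ℝ) be increasing and concave, (B^x)_{x∈ℝ} an increasing (in x) family of monotone convex subsets of L⁰(ℝ), and θ : C → ℝ. Define A^Y := {Z ∈ L⁰(ℝᴺ) | Λ₁(Z) ∈ B^{θ(Y)}}. Then each A^Y is monotone and property (P2a) holds: for all Y₁, Y₂ ∈ C, X₁ ∈ A^{Y₁}, X₂ ∈ A^{Y₂}, λ ∈ [0,1], there exists α ∈ [0,1] such that λX₁+(1−λ)X₂ ∈ A^{αY₁+(1−α)Y₂}. -/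
open MeasureTheory

/-! It suffices to take `α ∈ {0, 1}`, picking the endpoint `Yᵢ` with the larger `θ`. Since the
family `B` is increasing, both `Λ₁(X₁)` and `Λ₁(X₂)` then lie in the convex set `B^{max θ(Yᵢ)}`,
hence so does `λΛ₁(X₁) + (1-λ)Λ₁(X₂)`, which `Λ₁(λX₁ + (1-λ)X₂)` dominates by concavity. -/

theorem Monotone.convex_combination_mem_max {𝕜 E ι : Type*} [Semiring 𝕜] [PartialOrder 𝕜]
    [AddCommMonoid E] [Module 𝕜 E] [LinearOrder ι] {B : ι → Set E} (hB : Monotone B)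
    (hconv : ∀ x, Convex 𝕜 (B x)) {x₁ x₂ : ι} {z₁ z₂ : E} (h₁ : z₁ ∈ B x₁) (h₂ : z₂ ∈ B x₂)
    {a b : 𝕜} (ha : 0 ≤ a) (hb : 0 ≤ b) (hab : a + b = 1) :
    a • z₁ + b • z₂ ∈ B (max x₁ x₂) :=
  hconv _ (hB (le_max_left _ _) h₁) (hB (le_max_right _ _) h₂) ha hb hab

theorem exists_apply_convex_combination_eq_max {E α : Type*} [AddCommGroup E] [Module ℝ E]
    [LinearOrder α] (f : E → α) (y₁ y₂ : E) :
    ∃ a : ℝ, 0 ≤ a ∧ a ≤ 1 ∧ f (a • y₁ + (1 - a) • y₂) = max (f y₁) (f y₂) := by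
  rcases le_total (f y₁) (f y₂) with h | h
  · exact ⟨0, le_rfl, zero_le_one, by simp [max_eq_right h]⟩
  · exact ⟨1, zero_le_one, le_rfl, by simp [max_eq_left h]⟩

/-- with `Λ₁` increasing and concave, `(B^x)` an increasing family of
monotone convex acceptance sets and `θ : C → ℝ`, the sets
`A^Y = {Z | Λ₁(Z) ∈ B^{θ(Y)}}` are monotone and satisfy property (P2a). -/
theorem stmt7 {Ω : Type*} [MeasureSpace Ω] {N : ℕ}
    (C : Set (Ω → Fin N → ℝ))
    (Λ₁ : (Ω → Fin N → ℝ) → (Ω → ℝ))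
    (hΛinc : ∀ X₁ X₂ : Ω → Fin N → ℝ,
      (∀ᵐ ω, ∀ i, X₁ ω i ≤ X₂ ω i) → ∀ᵐ ω, Λ₁ X₁ ω ≤ Λ₁ X₂ ω)
    (hΛconc : ∀ X₁ X₂ : Ω → Fin N → ℝ, ∀ l : ℝ, 0 ≤ l → l ≤ 1 →
      ∀ᵐ ω, l * Λ₁ X₁ ω + (1 - l) * Λ₁ X₂ ω ≤ Λ₁ (l • X₁ + (1 - l) • X₂) ω)
    (B : ℝ → Set (Ω → ℝ))
    (hBinc : ∀ x₁ x₂ : ℝ, x₁ ≤ x₂ → B x₁ ⊆ B x₂)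
    (hBmono : ∀ x : ℝ, ∀ Z ∈ B x, ∀ Z' : Ω → ℝ, (∀ᵐ ω, Z ω ≤ Z' ω) → Z' ∈ B x)
    (hBconv : ∀ x : ℝ, Convex ℝ (B x))
    (θ : (Ω → Fin N → ℝ) → ℝ) :
    (∀ Y ∈ C, ∀ X₁ : Ω → Fin N → ℝ, Λ₁ X₁ ∈ B (θ Y) →
      ∀ X₂ : Ω → Fin N → ℝ, (∀ᵐ ω, ∀ i, X₁ ω i ≤ X₂ ω i) → Λ₁ X₂ ∈ B (θ Y))
    ∧ (∀ Y₁ ∈ C, ∀ Y₂ ∈ C, ∀ X₁ : Ω → Fin N → ℝ, Λ₁ X₁ ∈ B (θ Y₁) →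
        ∀ X₂ : Ω → Fin N → ℝ, Λ₁ X₂ ∈ B (θ Y₂) → ∀ l : ℝ, 0 ≤ l → l ≤ 1 →
          ∃ a : ℝ, 0 ≤ a ∧ a ≤ 1 ∧
            Λ₁ (l • X₁ + (1 - l) • X₂) ∈ B (θ (a • Y₁ + (1 - a) • Y₂))) := by
  refine ⟨fun Y _ X₁ h₁ X₂ hle ↦ hBmono _ _ h₁ _ (hΛinc X₁ X₂ hle), ?_⟩
  intro Y₁ _ Y₂ _ X₁ h₁ X₂ h₂ l hl₀ hl₁
  obtain ⟨a, ha₀, ha₁, hθ⟩ := exists_apply_convex_combination_eq_max θ Y₁ Y₂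
  refine ⟨a, ha₀, ha₁, ?_⟩
  have hcomb : l • Λ₁ X₁ + (1 - l) • Λ₁ X₂ ∈ B (θ (a • Y₁ + (1 - a) • Y₂)) :=
    hθ ▸ Monotone.convex_combination_mem_max hBinc hBconv h₁ h₂ hl₀ (by linarith) (by ring)
  exact hBmono _ _ hcomb _ (hΛconc X₁ X₂ l hl₀ hl₁)
end

section
/- Let θ : C → ℝ and Λ : L⁰(ℝᴺ) × C → L⁰(ℝ) with Λ(·,Y) increasing and concave for each Y ∈ C, satisfying the compatibility: θ(Y₂) ≥ θ(Y₁) implies Λ(X,Y₂) ≥ Λ(X,Y₁) for all X. Let (B^x)_{x∈ℝ} be an increasing family of monotone convex subsets of L⁰(ℝ). Define A^Y := {Z | Λ(Z,Y) ∈ B^{θ(Y)}}. Then each A^Y is monotone, and property (P2) holds: for all m ∈ ℝ, Y₁, Y₂ ∈ C with π(Y₁) ≤ m, π(Y₂) ≤ m, X₁ ∈ A^{Y₁}, X₂ ∈ A^{Y₂}, λ ∈ [0,1], there exists Y ∈ C with π(Y) ≤ m and λX₁+(1−λ)X₂ ∈ A^Y. -/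
open MeasureTheory

/-- The paper's "monotone" subsets of `L⁰`. -/
def AEUpperSet {Ω β : Type*} [MeasurableSpace Ω] [Preorder β] (μ : Measure Ω)
    (S : Set (Ω → β)) : Prop :=
  ∀ Z ∈ S, ∀ Z' : Ω → β, Z ≤ᵐ[μ] Z' → Z' ∈ S

section

variable {Ω E : Type*} [MeasurableSpace Ω] {μ : Measure Ω}

theorem setOf_mem_subset_of_ae_le {F G : E → Ω → ℝ} {S T : Set (Ω → ℝ)} (hST : S ⊆ T)
    (hT : AEUpperSet μ T) (hFG : ∀ x, F x ≤ᵐ[μ] G x) :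
    {x | F x ∈ S} ⊆ {x | G x ∈ T} :=
  fun x hx => hT _ (hST hx) _ (hFG x)

theorem convex_setOf_mem_of_ae_concave [AddCommGroup E] [Module ℝ E] {F : E → Ω → ℝ}
    {S : Set (Ω → ℝ)} (hS : Convex ℝ S) (hSup : AEUpperSet μ S)
    (hF : ∀ x y : E, ∀ a : ℝ, 0 ≤ a → a ≤ 1 →
      ∀ᵐ ω ∂μ, a * F x ω + (1 - a) * F y ω ≤ F (a • x + (1 - a) • y) ω) :
    Convex ℝ {x | F x ∈ S} := by
  intro x hx y hy a b ha hb hab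
  obtain rfl : b = 1 - a := eq_sub_of_add_eq' hab
  exact hSup _ (hS hx hy ha hb hab) _ (hF x y a ha (by linarith))

end

/-- compatibility of `θ` and `Λ` with an increasing family of monotone
convex acceptance sets gives monotone sets `A^Y = {Z | Λ(Z,Y) ∈ B^{θ(Y)}}`
satisfying property (P2). -/
theorem stmt8 {Ω : Type*} [MeasureSpace Ω] {N : ℕ}
    (C : Set (Ω → Fin N → ℝ)) (π : (Ω → Fin N → ℝ) → ℝ)
    (θ : (Ω → Fin N → ℝ) → ℝ)
    (Λ : (Ω → Fin N → ℝ) → (Ω → Fin N → ℝ) → (Ω → ℝ))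
    (hΛinc : ∀ Y ∈ C, ∀ X₁ X₂ : Ω → Fin N → ℝ,
      (∀ᵐ ω, ∀ i, X₁ ω i ≤ X₂ ω i) → ∀ᵐ ω, Λ X₁ Y ω ≤ Λ X₂ Y ω)
    (hΛconc : ∀ Y ∈ C, ∀ X₁ X₂ : Ω → Fin N → ℝ, ∀ l : ℝ, 0 ≤ l → l ≤ 1 →
      ∀ᵐ ω, l * Λ X₁ Y ω + (1 - l) * Λ X₂ Y ω ≤ Λ (l • X₁ + (1 - l) • X₂) Y ω)
    (hcomp : ∀ Y₁ ∈ C, ∀ Y₂ ∈ C, θ Y₁ ≤ θ Y₂ →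
      ∀ X : Ω → Fin N → ℝ, ∀ᵐ ω, Λ X Y₁ ω ≤ Λ X Y₂ ω)
    (B : ℝ → Set (Ω → ℝ))
    (hBinc : ∀ x₁ x₂ : ℝ, x₁ ≤ x₂ → B x₁ ⊆ B x₂)
    (hBmono : ∀ x : ℝ, ∀ Z ∈ B x, ∀ Z' : Ω → ℝ, (∀ᵐ ω, Z ω ≤ Z' ω) → Z' ∈ B x)
    (hBconv : ∀ x : ℝ, Convex ℝ (B x)) :
    (∀ Y ∈ C, ∀ X₁ : Ω → Fin N → ℝ, Λ X₁ Y ∈ B (θ Y) →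
      ∀ X₂ : Ω → Fin N → ℝ, (∀ᵐ ω, ∀ i, X₁ ω i ≤ X₂ ω i) → Λ X₂ Y ∈ B (θ Y))
    ∧ (∀ m : ℝ, ∀ Y₁ ∈ C, ∀ Y₂ ∈ C, π Y₁ ≤ m → π Y₂ ≤ m →
        ∀ X₁ : Ω → Fin N → ℝ, Λ X₁ Y₁ ∈ B (θ Y₁) →
        ∀ X₂ : Ω → Fin N → ℝ, Λ X₂ Y₂ ∈ B (θ Y₂) → ∀ l : ℝ, 0 ≤ l → l ≤ 1 →
          ∃ Y ∈ C, π Y ≤ m ∧ Λ (l • X₁ + (1 - l) • X₂) Y ∈ B (θ Y)) := by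
  set A : (Ω → Fin N → ℝ) → Set (Ω → Fin N → ℝ) := fun Y => {X | Λ X Y ∈ B (θ Y)}
  have hAconv : ∀ Y ∈ C, Convex ℝ (A Y) := fun Y hY =>
    convex_setOf_mem_of_ae_concave (hBconv _) (hBmono _) (hΛconc Y hY)
  have hAmono : ∀ Y₁ ∈ C, ∀ Y₂ ∈ C, θ Y₁ ≤ θ Y₂ → A Y₁ ⊆ A Y₂ := fun Y₁ hY₁ Y₂ hY₂ hθ =>
    setOf_mem_subset_of_ae_le (hBinc _ _ hθ) (hBmono _) (hcomp Y₁ hY₁ Y₂ hY₂ hθ)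
  refine ⟨fun Y hY X₁ hX₁ X₂ hle => hBmono _ _ hX₁ _ (hΛinc Y hY X₁ X₂ hle), ?_⟩
  intro m Y₁ hY₁ Y₂ hY₂ hπ₁ hπ₂ X₁ hX₁ X₂ hX₂ l hl0 hl1
  -- both positions are accepted under whichever of `Y₁`, `Y₂` has the larger `θ`
  rcases le_total (θ Y₁) (θ Y₂) with hθ | hθ
  · exact ⟨Y₂, hY₂, hπ₂,
      hAconv Y₂ hY₂ (hAmono Y₁ hY₁ Y₂ hY₂ hθ hX₁) hX₂ hl0 (by linarith) (by ring)⟩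
  · exact ⟨Y₁, hY₁, hπ₁,
      hAconv Y₁ hY₁ hX₁ (hAmono Y₂ hY₂ Y₁ hY₁ hθ hX₂) hl0 (by linarith) (by ring)⟩
end

section
/- With C = C_ℝ := {Y ∈ L⁰(ℝᴺ) | ΣYⁿ is a deterministic constant}, the systemic risk measure ρ(X) := inf{π̃(ΣYⁿ) | Y ∈ C_ℝ, X+Y ∈ A^{θ(ΣYⁿ)}} satisfies ρ(X) = ρ̃(Σₙ Xⁿ) for some decreasing quasi-convex map ρ̃ : L⁰(ℝ) → ℝ ∪ {±∞}. In particular, ρ(X₁) = ρ(X₂) whenever Σₙ X₁ⁿ = Σₙ X₂ⁿ a.s. -/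
open MeasureTheory

private def addC {Ω : Type*} {N : ℕ} (i₀ : Fin N) (W : Ω → Fin N → ℝ) (g : Ω → ℝ) :
    Ω → Fin N → ℝ := fun ω i => W ω i + if i = i₀ then g ω else 0

private lemma addC_sum {Ω : Type*} {N : ℕ} (i₀ : Fin N) (W : Ω → Fin N → ℝ) (g : Ω → ℝ)
    (ω : Ω) : ∑ i, addC i₀ W g ω i = (∑ i, W ω i) + g ω := by
  simp [addC, Finset.sum_add_distrib]

private lemma addC_le {Ω : Type*} {N : ℕ} (i₀ : Fin N) (W : Ω → Fin N → ℝ) (g : Ω → ℝ)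
    (ω : Ω) (hg : 0 ≤ g ω) : ∀ i, W ω i ≤ addC i₀ W g ω i := by
  intro i
  simp only [addC]
  split <;> simp [hg]

/-- with fully flexible allocations `C = C_ℝ`, the systemic risk
measure factors through the sum of the risk factors via a decreasing
quasi-convex univariate map `ρ̃`; in particular `ρ` only depends on `Σ Xⁿ`. -/
theorem stmt11 {Ω : Type*} [MeasureSpace Ω] [IsProbabilityMeasure (volume : Measure Ω)]
    {N : ℕ}
    (A : ℝ → Set (Ω → Fin N → ℝ))
    (hAinc : ∀ x₁ x₂ : ℝ, x₁ ≤ x₂ → A x₁ ⊆ A x₂)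
    (hAmono : ∀ x : ℝ, ∀ Z ∈ A x, ∀ Z' : Ω → Fin N → ℝ,
      (∀ᵐ ω, ∀ i, Z ω i ≤ Z' ω i) → Z' ∈ A x)
    (hAconv : ∀ x : ℝ, Convex ℝ (A x))
    (θ : ℝ → ℝ) (hθ : Monotone θ)
    (πt : ℝ → ℝ) (hπt : Monotone πt)
    (ρ : (Ω → Fin N → ℝ) → EReal)
    (hρ : ∀ X, ρ X = sInf {r : EReal | ∃ Y : Ω → Fin N → ℝ, ∃ c : ℝ,
      (∀ᵐ ω, ∑ i, Y ω i = c) ∧ X + Y ∈ A (θ c) ∧ r = (πt c : EReal)}) :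
    (∃ ρt : (Ω → ℝ) → EReal,
      (∀ Z₁ Z₂ : Ω → ℝ, (∀ᵐ ω, Z₁ ω ≤ Z₂ ω) → ρt Z₂ ≤ ρt Z₁) ∧
      (∀ Z₁ Z₂ : Ω → ℝ, ∀ l : ℝ, 0 ≤ l → l ≤ 1 →
        ρt (l • Z₁ + (1 - l) • Z₂) ≤ max (ρt Z₁) (ρt Z₂)) ∧
      (∀ X : Ω → Fin N → ℝ, ρ X = ρt (fun ω => ∑ i, X ω i)))
    ∧ ∀ X₁ X₂ : Ω → Fin N → ℝ,
        (∀ᵐ ω, ∑ i, X₁ ω i = ∑ i, X₂ ω i) → ρ X₁ = ρ X₂ := by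
  -- The final "in particular" claim, valid for every `N`.
  have key : ∀ X₁ X₂ : Ω → Fin N → ℝ, (∀ᵐ ω, ∑ i, X₁ ω i = ∑ i, X₂ ω i) →
      {r : EReal | ∃ Y : Ω → Fin N → ℝ, ∃ c : ℝ,
        (∀ᵐ ω, ∑ i, Y ω i = c) ∧ X₁ + Y ∈ A (θ c) ∧ r = (πt c : EReal)} ⊆
      {r : EReal | ∃ Y : Ω → Fin N → ℝ, ∃ c : ℝ,
        (∀ᵐ ω, ∑ i, Y ω i = c) ∧ X₂ + Y ∈ A (θ c) ∧ r = (πt c : EReal)} := by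
    intro X₁ X₂ hsum r hr
    obtain ⟨Y, c, h1, h2, h3⟩ := hr
    refine ⟨X₁ + Y - X₂, c, ?_, ?_, h3⟩
    · filter_upwards [h1, hsum] with ω h hs
      simp only [Pi.sub_apply, Pi.add_apply, Finset.sum_sub_distrib,
        Finset.sum_add_distrib]
      rw [h]; linarith
    · have : X₂ + (X₁ + Y - X₂) = X₁ + Y := by abel
      rw [this]; exact h2
  have last : ∀ X₁ X₂ : Ω → Fin N → ℝ,
      (∀ᵐ ω, ∑ i, X₁ ω i = ∑ i, X₂ ω i) → ρ X₁ = ρ X₂ := by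
    intro X₁ X₂ hsum
    rw [hρ X₁, hρ X₂]
    congr 1
    exact Set.Subset.antisymm (key X₁ X₂ hsum)
      (key X₂ X₁ (by filter_upwards [hsum] with ω h using h.symm))
  refine ⟨?_, last⟩
  rcases Nat.eq_zero_or_pos N with h0 | hpos
  · -- degenerate case `N = 0`: the domain of `ρ` is a singleton
    subst h0
    refine ⟨fun _ => ρ (fun _ i => i.elim0), fun _ _ _ => le_refl _,
      fun _ _ _ _ _ => le_max_left _ _, fun X => ?_⟩
    congr 1
    funext ω i
    exact i.elim0
  · -- main case : `N ≥ 1`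
    set i₀ : Fin N := ⟨0, hpos⟩ with hi₀
    set S : (Ω → ℝ) → Set EReal := fun Z =>
      {r : EReal | ∃ W : Ω → Fin N → ℝ, ∃ c : ℝ,
        (∀ᵐ ω, ∑ i, W ω i = Z ω + c) ∧ W ∈ A (θ c) ∧ r = (πt c : EReal)} with hSdef
    refine ⟨fun Z => sInf (S Z), ?_, ?_, ?_⟩
    · -- decreasing
      intro Z₁ Z₂ hle
      refine sInf_le_sInf ?_
      rintro r ⟨W, c, h1, h2, h3⟩
      refine ⟨addC i₀ W (Z₂ - Z₁), c, ?_, ?_, h3⟩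
      · filter_upwards [h1, hle] with ω h hz
        rw [addC_sum, h]
        simp only [Pi.sub_apply]
        ring
      · refine hAmono _ W h2 _ ?_
        filter_upwards [hle] with ω hz
        exact addC_le i₀ W (Z₂ - Z₁) ω (by simpa using hz)
    · -- quasi-convex
      intro Z₁ Z₂ l hl0 hl1
      by_contra hcon
      push_neg at hcon
      have h₁ : sInf (S Z₁) < sInf (S (l • Z₁ + (1 - l) • Z₂)) :=
        lt_of_le_of_lt (le_max_left _ _) hcon
      have h₂ : sInf (S Z₂) < sInf (S (l • Z₁ + (1 - l) • Z₂)) :=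
        lt_of_le_of_lt (le_max_right _ _) hcon
      obtain ⟨r₁, hr₁, hr₁lt⟩ := sInf_lt_iff.mp h₁
      obtain ⟨r₂, hr₂, hr₂lt⟩ := sInf_lt_iff.mp h₂
      obtain ⟨W₁, c₁, h11, h12, h13⟩ := hr₁
      obtain ⟨W₂, c₂, h21, h22, h23⟩ := hr₂
      set c : ℝ := max c₁ c₂ with hc
      set c' : ℝ := l * c₁ + (1 - l) * c₂ with hc'
      have hc'le : c' ≤ c := by
        have hm1 := le_max_left c₁ c₂
        have hm2 := le_max_right c₁ c₂
        nlinarith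
      set W : Ω → Fin N → ℝ := l • W₁ + (1 - l) • W₂ with hW
      have hWA : W ∈ A (θ c) := by
        refine hAconv (θ c) (hAinc _ _ (hθ (le_max_left c₁ c₂)) h12)
          (hAinc _ _ (hθ (le_max_right c₁ c₂)) h22) hl0 (by linarith) (by ring)
      set W' : Ω → Fin N → ℝ := addC i₀ W (fun _ => c - c') with hW'
      have hW'A : W' ∈ A (θ c) := by
        refine hAmono _ W hWA _ ?_
        filter_upwards with ω
        exact addC_le i₀ W (fun _ => c - c') ω (show (0:ℝ) ≤ c - c' by linarith)
      have hmem : (πt c : EReal) ∈ S (l • Z₁ + (1 - l) • Z₂) := by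
        refine ⟨W', c, ?_, hW'A, rfl⟩
        filter_upwards [h11, h21] with ω e1 e2
        rw [hW', addC_sum]
        have : ∑ i, W ω i = l * (∑ i, W₁ ω i) + (1 - l) * (∑ i, W₂ ω i) := by
          simp [hW, Finset.sum_add_distrib, Finset.mul_sum]
        rw [this, e1, e2]
        simp only [Pi.add_apply, Pi.smul_apply, smul_eq_mul, hc']
        ring
      have hle : (πt c : EReal) ≤ max r₁ r₂ := by
        rcases le_total c₁ c₂ with h | h
        · have : c = c₂ := max_eq_right h
          rw [this, h23]
          exact le_max_right _ _
        · have : c = c₁ := max_eq_left h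
          rw [this, h13]
          exact le_max_left _ _
      exact absurd (sInf_le hmem)
        (not_le.mpr (lt_of_le_of_lt hle (max_lt hr₁lt hr₂lt)))
    · -- factorization
      intro X
      rw [hρ X]
      congr 1
      ext r
      constructor
      · rintro ⟨Y, c, h1, h2, h3⟩
        refine ⟨X + Y, c, ?_, h2, h3⟩
        filter_upwards [h1] with ω h
        simp only [Pi.add_apply, Finset.sum_add_distrib]
        rw [h]
      · rintro ⟨W, c, h1, h2, h3⟩
        refine ⟨W - X, c, ?_, ?_, h3⟩
        · filter_upwards [h1] with ω h
          simp only [Pi.sub_apply, Finset.sum_sub_distrib]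
          rw [h]; ring
        · have : X + (W - X) = W := by abel
          rw [this]; exact h2
end

section
/- Let (Ω,F,ℙ) be a finite probability space with ℙ(ω_j) = p_j > 0 for j = 1,…,M, let α₁,…,α_N > 0, γ > 0, and X = (X¹,…,Xᴺ) a random vector. Define ρ(X) := inf{c ∈ ℝ | ∃ Y ∈ L⁰(ℝᴺ) with Σᵢ Yⁱ = c a.s. and E[Σᵢ exp(−αᵢ(Xⁱ+Yⁱ))] ≤ γ}. Then ρ(X) = −β_N log(γ/(α₁ β_N d_N)), where β_N = Σᵢ 1/αᵢ and d_N = E[exp(−(1/β_N)(Σᵢ Xⁱ) − (1/β_N) Σᵢ (1/αᵢ) log(α₁/αᵢ))]. -/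
/-!
Fix a scenario and write `v = X + Y` for the position after allocation. Minimising
`∑ᵢ exp(-αᵢ vᵢ)` under `∑ᵢ vᵢ = s` is solved by equalising the marginals `αᵢ exp(-αᵢ vᵢ)`;
the minimum is `β exp((∑ᵢ αᵢ⁻¹ log αᵢ - s) / β)` with `β = ∑ᵢ αᵢ⁻¹`, and Jensen's inequality for
`exp` with weights `αᵢ⁻¹ / β` shows that no allocation does better. Since the minimum scales by
`exp(-c / β)` when the total `s` is shifted by `c`, a total allocation `c` is acceptable iff
`D exp(-c / β) ≤ γ`, where `D` is the expected minimum at `c = 0`; hence the acceptable `c`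
form the half-line `[-β log(γ / D), ∞)`.
-/

open Finset Real

section MinSumExp

variable {ι : Type*} [Fintype ι] (α : ι → ℝ)

/-- The least value of `∑ i, exp (-(α i) * v i)` over all `v` with `∑ i, v i = s`. -/
noncomputable def minSumExp (s : ℝ) : ℝ :=
  (∑ i, (α i)⁻¹) * exp ((∑ i, (α i)⁻¹ * log (α i) - s) / ∑ i, (α i)⁻¹)

variable {α}

lemma sum_inv_pos [Nonempty ι] (hα : ∀ i, 0 < α i) : 0 < ∑ i, (α i)⁻¹ :=
  Finset.sum_pos (fun i _ => inv_pos.2 (hα i)) univ_nonempty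

lemma minSumExp_le_sum_exp [Nonempty ι] (hα : ∀ i, 0 < α i) (v : ι → ℝ) :
    minSumExp α (∑ i, v i) ≤ ∑ i, exp (-(α i) * v i) := by
  set β := ∑ i, (α i)⁻¹ with hβ_def
  have hβ : 0 < β := sum_inv_pos hα
  have jensen := convexOn_exp.map_sum_le (t := univ) (w := fun i => (α i)⁻¹ / β)
    (p := fun i => log (α i) - α i * v i)
    (fun i _ => div_nonneg (inv_pos.2 (hα i)).le hβ.le)
    (by rw [← Finset.sum_div, div_self hβ.ne']) (fun _ _ => Set.mem_univ _)
  have hmean : ∑ i, (α i)⁻¹ / β * (log (α i) - α i * v i)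
      = (∑ i, (α i)⁻¹ * log (α i) - ∑ i, v i) / β := by
    rw [sub_div, Finset.sum_div, Finset.sum_div, ← Finset.sum_sub_distrib]
    refine Finset.sum_congr rfl fun i _ => ?_
    field_simp [(hα i).ne']
  have hvalues : ∑ i, (α i)⁻¹ / β * exp (log (α i) - α i * v i)
      = (∑ i, exp (-(α i) * v i)) / β := by
    rw [Finset.sum_div]
    refine Finset.sum_congr rfl fun i _ => ?_
    rw [exp_sub, exp_log (hα i), neg_mul, exp_neg]
    field_simp [(hα i).ne']
  simp only [smul_eq_mul] at jensen
  rw [hmean, hvalues, le_div_iff₀ hβ] at jensen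
  rw [minSumExp, ← hβ_def, mul_comm]
  exact jensen

/-- The allocation attaining `minSumExp`: all marginals `α i * exp (-(α i) * v i)` are equal. -/
lemma exists_sum_eq_sum_exp_eq_minSumExp [Nonempty ι] (hα : ∀ i, 0 < α i) (s : ℝ) :
    ∃ v : ι → ℝ, ∑ i, v i = s ∧ ∑ i, exp (-(α i) * v i) = minSumExp α s := by
  set β := ∑ i, (α i)⁻¹ with hβ_def
  have hβ : 0 < β := sum_inv_pos hα
  set μ := (∑ i, (α i)⁻¹ * log (α i) - s) / β with hμ_def
  refine ⟨fun i => (log (α i) - μ) / α i, ?_, ?_⟩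
  · have hterm : ∀ i, (log (α i) - μ) / α i = (α i)⁻¹ * log (α i) - (α i)⁻¹ * μ := fun i => by
      ring
    simp only [hterm]
    rw [Finset.sum_sub_distrib, ← Finset.sum_mul, ← hβ_def, hμ_def]
    field_simp
    ring
  · have hterm : ∀ i, exp (-(α i) * ((log (α i) - μ) / α i)) = (α i)⁻¹ * exp μ := fun i => by
      rw [show -(α i) * ((log (α i) - μ) / α i) = -log (α i) + μ by field_simp [(hα i).ne']; ring,
        exp_add, exp_neg, exp_log (hα i)]
    simp only [hterm, ← Finset.sum_mul, minSumExp, ← hβ_def, ← hμ_def]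

lemma minSumExp_add (s c : ℝ) :
    minSumExp α (s + c) = minSumExp α s * exp (-c / ∑ i, (α i)⁻¹) := by
  rw [minSumExp, minSumExp, mul_assoc, ← exp_add]
  congr 2
  ring

lemma minSumExp_eq_mul_exp_log_div [Nonempty ι] (hα : ∀ i, 0 < α i) (k : ι) (s : ℝ) :
    minSumExp α s = α k * (∑ i, (α i)⁻¹) * exp (-(∑ i, (α i)⁻¹)⁻¹ * s
      - (∑ i, (α i)⁻¹)⁻¹ * ∑ i, (α i)⁻¹ * log (α k / α i)) := by
  have hlog : ∑ i, (α i)⁻¹ * log (α k / α i)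
      = (∑ i, (α i)⁻¹) * log (α k) - ∑ i, (α i)⁻¹ * log (α i) := by
    simp only [log_div (hα k).ne' (hα _).ne', mul_sub, Finset.sum_sub_distrib, Finset.sum_mul]
  have hexponent : -(∑ i, (α i)⁻¹)⁻¹ * s - (∑ i, (α i)⁻¹)⁻¹ * ∑ i, (α i)⁻¹ * log (α k / α i)
      = -log (α k) + (∑ i, (α i)⁻¹ * log (α i) - s) / ∑ i, (α i)⁻¹ := by
    rw [hlog]
    have hβ : ∑ i, (α i)⁻¹ ≠ 0 := (sum_inv_pos hα).ne'
    generalize ∑ i, (α i)⁻¹ = β at hβ ⊢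
    field_simp
    ring
  rw [minSumExp, hexponent, exp_add, exp_neg, exp_log (hα k)]
  field_simp [(hα k).ne']

lemma setOf_exists_allocation_eq {Ω : Type*} [Fintype Ω] [Nonempty ι] (hα : ∀ i, 0 < α i)
    (p : Ω → ℝ) (hp : ∀ j, 0 ≤ p j) (γ : ℝ) (X : Ω → ι → ℝ) :
    {c : ℝ | ∃ Y : Ω → ι → ℝ, (∀ j, ∑ i, Y j i = c) ∧
        ∑ j, p j * ∑ i, exp (-(α i) * (X j i + Y j i)) ≤ γ}
      = {c : ℝ | (∑ j, p j * minSumExp α (∑ i, X j i)) * exp (-c / ∑ i, (α i)⁻¹) ≤ γ} := by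
  ext c
  have hshift : (∑ j, p j * minSumExp α (∑ i, X j i)) * exp (-c / ∑ i, (α i)⁻¹)
      = ∑ j, p j * minSumExp α (∑ i, X j i + c) := by
    rw [Finset.sum_mul]
    exact Finset.sum_congr rfl fun j _ => by rw [minSumExp_add]; ring
  rw [Set.mem_ofPred_eq, Set.mem_ofPred_eq, hshift]
  constructor
  · rintro ⟨Y, hY, hγY⟩
    refine le_trans (Finset.sum_le_sum fun j _ => mul_le_mul_of_nonneg_left ?_ (hp j)) hγY
    simpa only [Finset.sum_add_distrib, hY j] using minSumExp_le_sum_exp hα fun i => X j i + Y j i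
  · intro hγc
    choose v hv_sum hv_eq using fun j => exists_sum_eq_sum_exp_eq_minSumExp hα (∑ i, X j i + c)
    refine ⟨fun j i => v j i - X j i, fun j => ?_, ?_⟩
    · rw [Finset.sum_sub_distrib, hv_sum, add_sub_cancel_left]
    · simpa only [add_sub_cancel, hv_eq] using hγc

end MinSumExp

lemma setOf_mul_exp_le_eq_Ici {D β γ : ℝ} (hD : 0 < D) (hβ : 0 < β) (hγ : 0 < γ) :
    {c : ℝ | D * exp (-c / β) ≤ γ} = Set.Ici (-β * log (γ / D)) := by
  ext c
  rw [Set.mem_ofPred_eq, Set.mem_Ici, ← le_div_iff₀' hD, ← le_log_iff_exp_le (div_pos hγ hD),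
    div_le_iff₀ hβ]
  constructor <;> intro h <;> linarith

/-- explicit value of the systemic risk measure with exponential
aggregation and fully flexible scenario-dependent allocations on a finite
probability space:
`ρ(X) = −β_N log(γ/(α₁ β_N d_N))` with `β_N = Σᵢ 1/αᵢ` and
`d_N = E[exp(−β_N⁻¹ Σᵢ Xⁱ − β_N⁻¹ Σᵢ αᵢ⁻¹ log(α₁/αᵢ))]`. -/
theorem stmt19 {M N : ℕ} [NeZero N]
    (p : Fin M → ℝ) (hp : ∀ j, 0 < p j) (hps : ∑ j, p j = 1)
    (α : Fin N → ℝ) (hα : ∀ i, 0 < α i) (γ : ℝ) (hγ : 0 < γ)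
    (X : Fin M → Fin N → ℝ) :
    sInf {c : ℝ | ∃ Y : Fin M → Fin N → ℝ, (∀ j, ∑ i, Y j i = c) ∧
        ∑ j, p j * ∑ i, Real.exp (-(α i) * (X j i + Y j i)) ≤ γ}
      = -(∑ i, (α i)⁻¹) * Real.log (γ / (α 0 * (∑ i, (α i)⁻¹) *
          ∑ j, p j * Real.exp (-(∑ i, (α i)⁻¹)⁻¹ * (∑ i, X j i)
            - (∑ i, (α i)⁻¹)⁻¹ * ∑ i, (α i)⁻¹ * Real.log (α 0 / α i)))) := by
  have : Nonempty (Fin M) := Fin.pos_iff_nonempty.1 <| Nat.pos_of_ne_zero <| by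
    rintro rfl
    simp at hps
  have hD : 0 < ∑ j, p j * minSumExp α (∑ i, X j i) :=
    Finset.sum_pos (fun j _ => mul_pos (hp j) (mul_pos (sum_inv_pos hα) (exp_pos _)))
      univ_nonempty
  rw [setOf_exists_allocation_eq hα p (fun j => (hp j).le),
    setOf_mul_exp_le_eq_Ici hD (sum_inv_pos hα) hγ, csInf_Ici, Finset.mul_sum]
  simp only [minSumExp_eq_mul_exp_log_div hα 0, mul_left_comm (p _)]
end
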